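/- Consider the alphabet 𝒜 = {0,1} and forbidden patterns ℱ = {000, 111} (three consecutive equal letters) on ℤ. In the no-pass Domino game Γ*(𝒜, ℱ, ℤ), in which each player on their turn must colour an uncoloured cell of ℤ (passing is not allowed), the position with empty board and B to move is winning for A (i.e. losing for B); whereas in the Domino game Γ(𝒜, ℱ, ℤ) with passes allowed, the position with empty board and B to move is winning for B. -/

import Mathlib

open Filter Topology

attribute [local instance] Classical.propDecidable

/-- The two players. -/
inductive Player | A | B
deriving DecidableEq

/-- A (possibly partial) colouring of `ℤ`: `none` means uncoloured.
Colours are natural numbers; the alphabet of size `m` is `{0, …, m-1}`. -/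
abbrev BoardZ := ℤ → Option ℕ

/-- A finite pattern on `ℤ`, encoded as a list of tiles (cell, colour). -/
abbrev PatternZ := List (ℤ × ℕ)

/-- A move: `none` is a pass, `some (i, a)` colours cell `i` with colour `a`. -/
abbrev MoveZ := Option (ℤ × ℕ)

/-- A (positional) strategy: a move for every position. -/
abbrev StrategyZ := BoardZ → MoveZ

/-- The pattern `p` occurs in the board `x` translated by `t`. -/
def occursAtZ (p : PatternZ) (x : BoardZ) (t : ℤ) : Prop :=
  ∀ q ∈ p, x (t + q.1) = some q.2

/-- A position is final when a translate of some forbidden pattern occurs. -/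
def isFinalZ (F : Set PatternZ) (x : BoardZ) : Prop :=
  ∃ p ∈ F, ∃ t : ℤ, occursAtZ p x t

/-- A colouring move: an uncoloured cell of `ℤ` receives a colour of the alphabet
`{0, …, m-1}` (a pass is not a colouring move). -/
def legalColour (m : ℕ) (x : BoardZ) : MoveZ → Prop
  | none => False
  | some (i, a) => x i = none ∧ a < m

/-- Legality of a move in the game with passes allowed. -/
def legalZ (m : ℕ) (x : BoardZ) (mv : MoveZ) : Prop :=
  mv = none ∨ legalColour m x mv

def applyZ (x : BoardZ) : MoveZ → BoardZ
  | none => x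
  | some (i, a) => Function.update x i (some a)

/-- One step of the game: the move proposed by the strategy is played if legal
(an illegal move is treated as a pass). -/
noncomputable def stepZ (m : ℕ) (st : StrategyZ) (x : BoardZ) : BoardZ :=
  if legalZ m x (st x) then applyZ x (st x) else x

/-- The play generated by strategies `stA`, `stB` with turn order `s`,
starting from the empty board. -/
noncomputable def playZ (m : ℕ) (s : ℕ → Player) (stA stB : StrategyZ) : ℕ → BoardZ
  | 0 => fun _ => none
  | t + 1 => stepZ m (match s t with | .A => stA | .B => stB) (playZ m s stA stB t)

/-- The alternating turn order: `A` plays first. -/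
def alt : ℕ → Player := fun t => if t % 2 = 0 then .A else .B

/-- A strategy for the no-pass game: on every board having an uncoloured cell,
it plays a legal colouring move (never a pass). -/
def NoPassStrategy (m : ℕ) (st : StrategyZ) : Prop :=
  ∀ x : BoardZ, (∃ i : ℤ, x i = none) → legalColour m x (st x)

/-- The forbidden patterns `000` and `111` on three consecutive cells. -/
def F01 : Set PatternZ :=
  {p | p = [((0 : ℤ), 0), ((1 : ℤ), 0), ((2 : ℤ), 0)] ∨
       p = [((0 : ℤ), 1), ((1 : ℤ), 1), ((2 : ℤ), 1)]}

/-- The turn order where `B` moves first and players alternate. -/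
def altBfirst : ℕ → Player := fun t => if t % 2 = 0 then .B else .A

/-!
In `Γ*` the second player is forced to move: after `B` colours a cell, `A` copies that colour
next to it, producing a pair `bb` with two free ends. `B` cannot block both ends in one move and may
not pass, so `A` completes `bbb` on the next turn.

In `Γ`, `B` pairs the cells as `{2k, 2k+1}`. Whenever `A` colours one cell of a pair, `B` colours
its partner with the other colour, and otherwise `B` passes. Every three consecutive cells contain a
whole pair, so no monochromatic triple ever appears.
-/

open Function

section Play

variable {m : ℕ} {st : StrategyZ} {x : BoardZ}

lemma playZ_succ_of_eq_A {s : ℕ → Player} {stA stB : StrategyZ} {t : ℕ} (h : s t = .A) :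
    playZ m s stA stB (t + 1) = stepZ m stA (playZ m s stA stB t) := by
  simp only [playZ, h]

lemma playZ_succ_of_eq_B {s : ℕ → Player} {stA stB : StrategyZ} {t : ℕ} (h : s t = .B) :
    playZ m s stA stB (t + 1) = stepZ m stB (playZ m s stA stB t) := by
  simp only [playZ, h]

lemma altBfirst_of_even {t : ℕ} (h : t % 2 = 0) : altBfirst t = .B :=
  if_pos h

lemma altBfirst_of_odd {t : ℕ} (h : t % 2 = 1) : altBfirst t = .A :=
  if_neg (by omega)

lemma legalColour_iff {mv : MoveZ} :
    legalColour m x mv ↔ ∃ i a, mv = some (i, a) ∧ x i = none ∧ a < m := by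
  rcases mv with _ | ⟨i, a⟩ <;> simp [legalColour]

lemma stepZ_of_legalColour (h : legalColour m x (st x)) : stepZ m st x = applyZ x (st x) :=
  if_pos (Or.inr h)

lemma stepZ_of_eq_none (h : st x = none) : stepZ m st x = x := by
  rw [stepZ, if_pos (show legalZ m x (st x) from Or.inl h), h]
  rfl

lemma stepZ_eq_update_of_legalColour (h : legalColour m x (st x)) :
    ∃ i a, x i = none ∧ a < m ∧ stepZ m st x = update x i (some a) := by
  obtain ⟨i, a, hmv, hi, ha⟩ := legalColour_iff.1 h
  exact ⟨i, a, hi, ha, by rw [stepZ_of_legalColour h, hmv]; rfl⟩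

lemma stepZ_eq_self_or_update :
    stepZ m st x = x ∨ ∃ i a, x i = none ∧ a < m ∧ stepZ m st x = update x i (some a) := by
  by_cases h : legalZ m x (st x)
  · rcases h with h | h
    · exact Or.inl (stepZ_of_eq_none h)
    · exact Or.inr (stepZ_eq_update_of_legalColour h)
  · exact Or.inl (if_neg h)

lemma NoPassStrategy.stepZ_eq_update (hst : NoPassStrategy m st) (hx : ∃ i, x i = none) :
    ∃ i a, x i = none ∧ a < m ∧ stepZ m st x = update x i (some a) :=
  stepZ_eq_update_of_legalColour (hst x hx)

lemma isFinalZ_F01_iff : isFinalZ F01 x ↔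
    ∃ t c, c < 2 ∧ x t = some c ∧ x (t + 1) = some c ∧ x (t + 2) = some c := by
  simp only [isFinalZ, F01, occursAtZ, Set.mem_ofPred_eq, or_and_right, exists_or, exists_eq_left,
    List.forall_mem_cons, List.not_mem_nil, IsEmpty.forall_iff, implies_true, add_zero, and_true]
  constructor
  · rintro (⟨t, h⟩ | ⟨t, h⟩)
    · exact ⟨t, 0, by norm_num, h⟩
    · exact ⟨t, 1, by norm_num, h⟩
  · rintro ⟨t, c, hc, h⟩
    interval_cases c
    · exact Or.inl ⟨t, h⟩
    · exact Or.inr ⟨t, h⟩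

end Play

section NoPass

variable {x : BoardZ}

noncomputable def orElseColour (m : ℕ) (mv : StrategyZ) : StrategyZ := fun x =>
  if legalColour m x (mv x) then mv x
  else if h : ∃ i, x i = none then some (h.choose, 0) else none

lemma noPassStrategy_orElseColour {m : ℕ} (hm : 0 < m) (mv : StrategyZ) :
    NoPassStrategy m (orElseColour m mv) := by
  intro x hx
  unfold orElseColour
  split_ifs with h
  · exact h
  · exact ⟨hx.choose_spec, hm⟩

lemma stepZ_orElseColour {m : ℕ} {mv : StrategyZ} (h : legalColour m x (mv x)) :
    stepZ m (orElseColour m mv) x = applyZ x (mv x) := by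
  have hmv : orElseColour m mv x = mv x := if_pos h
  rw [stepZ_of_legalColour (hmv ▸ h), hmv]

noncomputable def copyThenWin : StrategyZ := fun x =>
  if h : ∃ c : ℤ × ℕ, x c.1 = some c.2 ∧ ∀ i ≠ c.1, x i = none then
    some (h.choose.1 + 1, h.choose.2)
  else if h : ∃ mv, legalColour 2 x mv ∧ isFinalZ F01 (applyZ x mv) then h.choose
  else none

lemma copyThenWin_of_forall_ne {j : ℤ} {b : ℕ} (hj : x j = some b)
    (hx : ∀ i ≠ j, x i = none) : copyThenWin x = some (j + 1, b) := by
  have h : ∃ c : ℤ × ℕ, x c.1 = some c.2 ∧ ∀ i ≠ c.1, x i = none :=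
    ⟨(j, b), hj, hx⟩
  have hc : h.choose = (j, b) := by
    have h1 := h.choose_spec.1
    have hj' : h.choose.1 = j := by
      by_contra hne
      rw [hx _ hne] at h1
      exact nomatch h1
    rw [hj', hj] at h1
    exact Prod.ext hj' (Option.some.inj h1).symm
  simp only [copyThenWin, dif_pos h, hc]

lemma isFinalZ_stepZ_copyThenWin {j : ℤ} (hj : x j ≠ none) (hj1 : x (j + 1) ≠ none)
    (hwin : ∃ mv, legalColour 2 x mv ∧ isFinalZ F01 (applyZ x mv)) :
    isFinalZ F01 (stepZ 2 (orElseColour 2 copyThenWin) x) := by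
  have hns : ¬ ∃ c : ℤ × ℕ, x c.1 = some c.2 ∧ ∀ i ≠ c.1, x i = none := by
    rintro ⟨c, -, hall⟩
    by_cases hc : j = c.1
    · exact hj1 (hall _ (by omega))
    · exact hj (hall _ hc)
  have hmv : copyThenWin x = hwin.choose := by
    simp only [copyThenWin, dif_neg hns, dif_pos hwin]
  rw [stepZ_orElseColour (hmv ▸ hwin.choose_spec.1), hmv]
  exact hwin.choose_spec.2

lemma exists_winning_move_of_pair {j : ℤ} {b : ℕ} (hb : b < 2) (h0 : x j = some b)
    (h1 : x (j + 1) = some b) (hends : x (j - 1) = none ∨ x (j + 2) = none) :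
    ∃ mv, legalColour 2 x mv ∧ isFinalZ F01 (applyZ x mv) := by
  rcases hends with h | h
  · refine ⟨some (j - 1, b), ⟨h, hb⟩, isFinalZ_F01_iff.2 ⟨j - 1, b, hb, ?_⟩⟩
    simp [applyZ, update_apply, h0, h1, show j - 1 + 2 = j + 1 by ring]
  · refine ⟨some (j + 2, b), ⟨h, hb⟩, isFinalZ_F01_iff.2 ⟨j, b, hb, ?_⟩⟩
    simp [applyZ, h0, h1]

lemma isFinalZ_stepZ_copyThenWin_of_update {j k : ℤ} {b d : ℕ} (hb : b < 2)
    (h0 : x j = some b) (h1 : x (j + 1) = some b) (hl : x (j - 1) = none) (hr : x (j + 2) = none)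
    (hk : x k = none) :
    isFinalZ F01 (stepZ 2 (orElseColour 2 copyThenWin) (update x k (some d))) := by
  have hjk : j ≠ k := by rintro rfl; rw [h0] at hk; exact nomatch hk
  have hj1k : j + 1 ≠ k := by rintro rfl; rw [h1] at hk; exact nomatch hk
  have h0' : update x k (some d) j = some b := by rw [update_of_ne hjk, h0]
  have h1' : update x k (some d) (j + 1) = some b := by rw [update_of_ne hj1k, h1]
  refine isFinalZ_stepZ_copyThenWin (j := j) (by simp [h0']) (by simp [h1'])
    (exists_winning_move_of_pair hb h0' h1' ?_)
  by_cases hkl : j - 1 = k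
  · exact Or.inr (by rw [update_of_ne (by omega), hr])
  · exact Or.inl (by rw [update_of_ne hkl, hl])

theorem exists_noPassStrategy_forcing_final :
    ∃ stA : StrategyZ, NoPassStrategy 2 stA ∧ ∀ stB : StrategyZ, NoPassStrategy 2 stB →
      ∃ t : ℕ, isFinalZ F01 (playZ 2 altBfirst stA stB t) := by
  refine ⟨orElseColour 2 copyThenWin, noPassStrategy_orElseColour two_pos _,
    fun stB hB => ⟨4, ?_⟩⟩
  set P := playZ 2 altBfirst (orElseColour 2 copyThenWin) stB
  have h0 : ∀ i, P 0 i = none := fun _ => rfl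
  obtain ⟨j, b, -, hb, h1⟩ := hB.stepZ_eq_update (x := P 0) ⟨0, h0 0⟩
  replace h1 : P 1 = update (P 0) j (some b) := (playZ_succ_of_eq_B (t := 0) rfl).trans h1
  have hmv : copyThenWin (P 1) = some (j + 1, b) :=
    copyThenWin_of_forall_ne (by simp [h1]) (fun i hi => by simp [h1, hi, h0])
  have h2 : P 2 = update (P 1) (j + 1) (some b) := by
    rw [show P 2 = stepZ 2 (orElseColour 2 copyThenWin) (P 1) from playZ_succ_of_eq_A rfl,
      stepZ_orElseColour, hmv]
    · rfl
    · rw [hmv]; exact ⟨by simp [h1, h0], hb⟩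
  obtain ⟨k, d, hk, -, h3⟩ := hB.stepZ_eq_update (x := P 2) ⟨j + 2, by simp [h2, h1, h0]⟩
  rw [show P 4 = stepZ 2 (orElseColour 2 copyThenWin) (stepZ 2 stB (P 2)) from
    playZ_succ_of_eq_A (t := 3) rfl, h3]
  exact isFinalZ_stepZ_copyThenWin_of_update (j := j) hb (by simp [h2, h1]) (by simp [h2])
    (by simp [h2, h1, update_apply, h0]; omega) (by simp [h2, h1, h0]) hk

end NoPass

section Pairing

variable {x : BoardZ}

def partner (i : ℤ) : ℤ := if i % 2 = 0 then i + 1 else i - 1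

lemma partner_partner (i : ℤ) : partner (partner i) = i := by
  unfold partner; split_ifs <;> omega

lemma partner_ne (i : ℤ) : partner i ≠ i := by
  unfold partner; split_ifs <;> omega

lemma partner_of_even {i : ℤ} (h : i % 2 = 0) : partner i = i + 1 := if_pos h

lemma not_isFinalZ_F01 (h : ∀ i, x i ≠ none → x (partner i) ≠ x i) :
    ¬ isFinalZ F01 x := by
  rw [isFinalZ_F01_iff]
  rintro ⟨t, c, -, h0, h1, h2⟩
  rcases Int.emod_two_eq t with ht | ht
  · exact h t (by simp [h0]) (by rw [partner_of_even ht, h0, h1])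
  · refine h (t + 1) (by simp [h1]) ?_
    rw [partner_of_even (by omega), h1, add_assoc, one_add_one_eq_two, h2]

def PairedAt (x : BoardZ) (i : ℤ) : Prop :=
  x i ≠ none → x (partner i) ≠ none ∧ x (partner i) ≠ x i

def Paired (x : BoardZ) : Prop := ∀ i, PairedAt x i

def HalfPaired (x : BoardZ) (j : ℤ) : Prop :=
  x (partner j) = none ∧ ∀ i ≠ j, PairedAt x i

def AlmostPaired (x : BoardZ) : Prop := Paired x ∨ ∃ j, HalfPaired x j

lemma AlmostPaired.partner_ne (h : AlmostPaired x) {i : ℤ} (hi : x i ≠ none) :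
    x (partner i) ≠ x i := by
  rcases h with h | ⟨j, hj, h⟩
  · exact (h i hi).2
  · rcases eq_or_ne i j with rfl | hij
    · rw [hj]; exact hi.symm
    · exact (h i hij hi).2

def opposite (c : Option ℕ) : ℕ := if c = some 0 then 1 else 0

lemma some_opposite_ne (c : Option ℕ) : some (opposite c) ≠ c := by
  unfold opposite
  split_ifs with h
  · simp [h]
  · exact Ne.symm h

lemma opposite_lt_two (c : Option ℕ) : opposite c < 2 := by
  unfold opposite; split_ifs <;> norm_num

noncomputable def completePair : StrategyZ := fun x =>
  if h : ∃ i, x i ≠ none ∧ x (partner i) = none then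
    some (partner h.choose, opposite (x h.choose))
  else none

lemma Paired.partner_eq_none (h : Paired x) {i : ℤ} (hi : x i = none) :
    x (partner i) = none := by
  by_contra hne
  exact (h _ hne).1 (by rw [partner_partner, hi])

lemma HalfPaired.paired_update {j : ℤ} (h : HalfPaired x j) (hj : x j ≠ none) :
    Paired (update x (partner j) (some (opposite (x j)))) := by
  obtain ⟨hpj, hpaired⟩ := h
  have hyj : update x (partner j) (some (opposite (x j))) j = x j :=
    update_of_ne (partner_ne j).symm _ _
  intro i hi
  rcases eq_or_ne i (partner j) with rfl | hij'
  · rw [partner_partner, hyj, update_self]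
    exact ⟨hj, (some_opposite_ne _).symm⟩
  rcases eq_or_ne i j with rfl | hij
  · rw [hyj, update_self]
    exact ⟨Option.some_ne_none _, some_opposite_ne _⟩
  have hpij : partner i ≠ partner j := fun he =>
    hij (by rw [← partner_partner i, he, partner_partner])
  rw [update_of_ne hij'] at hi ⊢
  rw [update_of_ne hpij]
  exact hpaired i hij hi

lemma AlmostPaired.paired_stepZ_completePair (h : AlmostPaired x) :
    Paired (stepZ 2 completePair x) := by
  by_cases hhalf : ∃ i, x i ≠ none ∧ x (partner i) = none
  · obtain ⟨j, hpj, hpaired⟩ := h.resolve_left fun hp => by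
      obtain ⟨i, hi, hpi⟩ := hhalf
      exact (hp i hi).1 hpi
    obtain ⟨hj0, hpj0⟩ := hhalf.choose_spec
    have hchoose : hhalf.choose = j := by
      by_contra hne
      exact (hpaired _ hne hj0).1 hpj0
    have hmv : completePair x = some (partner j, opposite (x j)) := by
      simp only [completePair, dif_pos hhalf, hchoose]
    rw [hchoose] at hj0
    rw [stepZ_of_legalColour (by rw [hmv]; exact ⟨hpj, opposite_lt_two _⟩), hmv]
    exact HalfPaired.paired_update ⟨hpj, hpaired⟩ hj0
  · have hmv : completePair x = none := dif_neg hhalf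
    rw [stepZ_of_eq_none hmv]
    rcases h with h | ⟨j, hpj, hpaired⟩
    · exact h
    · intro i hi
      rcases eq_or_ne i j with rfl | hij
      · exact absurd ⟨i, hi, hpj⟩ hhalf
      · exact hpaired i hij hi

lemma Paired.almostPaired_stepZ {m : ℕ} (h : Paired x) (st : StrategyZ) :
    AlmostPaired (stepZ m st x) := by
  obtain hx | ⟨i, a, hi, -, hx⟩ := stepZ_eq_self_or_update (m := m) (st := st) (x := x)
  · rw [hx]; exact Or.inl h
  refine Or.inr ⟨i, ?_, fun k hki hk => ?_⟩
  · rw [hx, update_of_ne (partner_ne i), h.partner_eq_none hi]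
  rw [hx, update_of_ne hki] at hk ⊢
  have hpk : partner k ≠ i := fun he => (h k hk).1 (by rw [he, hi])
  rw [update_of_ne hpk]
  exact h k hk

lemma almostPaired_playZ_completePair (stA : StrategyZ) (n : ℕ) :
    AlmostPaired (playZ 2 altBfirst stA completePair (2 * n)) := by
  induction n with
  | zero => exact Or.inl fun i hi => absurd rfl hi
  | succ n ih =>
    rw [show 2 * (n + 1) = 2 * n + 1 + 1 by ring,
      playZ_succ_of_eq_A (altBfirst_of_odd (by omega)),
      playZ_succ_of_eq_B (altBfirst_of_even (by omega))]
    exact ih.paired_stepZ_completePair.almostPaired_stepZ stA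

theorem exists_strategy_avoiding_final :
    ∃ stB : StrategyZ, ∀ stA : StrategyZ, ∀ t : ℕ,
      ¬ isFinalZ F01 (playZ 2 altBfirst stA stB t) := by
  refine ⟨completePair, fun stA t => not_isFinalZ_F01 fun i hi => ?_⟩
  obtain ⟨n, rfl | rfl⟩ := Nat.even_or_odd' t
  · exact (almostPaired_playZ_completePair stA n).partner_ne hi
  · rw [playZ_succ_of_eq_B (altBfirst_of_even (by omega))] at hi ⊢
    exact ((almostPaired_playZ_completePair stA n).paired_stepZ_completePair i hi).2

end Pairing

/-- With alphabet `{0,1}` and forbidden patterns `{000, 111}` on `ℤ`: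
in the no-pass game `Γ*`, the position with empty board and `B` to move is winning
for `A`; in the game `Γ` with passes allowed, it is winning for `B`. -/
theorem zugzwang_000_111 :
    (∃ stA : StrategyZ, NoPassStrategy 2 stA ∧
        ∀ stB : StrategyZ, NoPassStrategy 2 stB →
          ∃ t : ℕ, isFinalZ F01 (playZ 2 altBfirst stA stB t)) ∧
    (∃ stB : StrategyZ, ∀ stA : StrategyZ, ∀ t : ℕ,
        ¬ isFinalZ F01 (playZ 2 altBfirst stA stB t)) :=
  ⟨exists_noPassStrategy_forcing_final, exists_strategy_avoiding_final⟩
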